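/- (Theorem 5, main result.) Assume the avoidance hypothesis. Then the topological frontier (boundary) of the remainder set S = {g(u) : u ∈ ℝ², ‖u‖ ≤ 1} is contained in the image of the unit sphere, i.e. frontier S ⊆ {g(u) : u ∈ ℝ², ‖u‖ = 1}. -/

import Mathlib

noncomputable section

/-- Matrix–vector multiplication, viewed as a map on the Euclidean plane. -/
def mv (M : Matrix (Fin 2) (Fin 2) ℝ) (u : EuclideanSpace ℝ (Fin 2)) :
    EuclideanSpace ℝ (Fin 2) := WithLp.toLp 2 (M.mulVec u)

/-- Range `r(p) = √((p₁−a)² + (p₂−b)²)` to the sensor located at `(a, b)`. -/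
def rr (a b : ℝ) (p : EuclideanSpace ℝ (Fin 2)) : ℝ :=
  Real.sqrt ((p 0 - a) ^ 2 + (p 1 - b) ^ 2)

/-- Bearing `θ(p)`: polar angle in `(−π, π]` of the complex number `(p₁−a) + i(p₂−b)`. -/
def theta (a b : ℝ) (p : EuclideanSpace ℝ (Fin 2)) : ℝ :=
  Complex.arg ⟨p 0 - a, p 1 - b⟩

/-- Jacobian matrix of the range–bearing measurement map at `p`. -/
def Jh (a b : ℝ) (p : EuclideanSpace ℝ (Fin 2)) : Matrix (Fin 2) (Fin 2) ℝ :=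
  !![(p 0 - a) / rr a b p, (p 1 - b) / rr a b p;
     -(p 1 - b) / (rr a b p) ^ 2, (p 0 - a) / (rr a b p) ^ 2]

/-- The range–bearing measurement map `h(p) = (r(p), θ(p))`. -/
def hMeas (a b : ℝ) (p : EuclideanSpace ℝ (Fin 2)) : EuclideanSpace ℝ (Fin 2) :=
  WithLp.toLp 2 ![rr a b p, theta a b p]

/-- The linearization remainder `g(u) = h(x + Eu) − h(x) − J_h(x)·(Eu)`. -/
def gRem (a b : ℝ) (x : EuclideanSpace ℝ (Fin 2)) (E : Matrix (Fin 2) (Fin 2) ℝ)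
    (u : EuclideanSpace ℝ (Fin 2)) : EuclideanSpace ℝ (Fin 2) :=
  hMeas a b (x + mv E u) - hMeas a b x - mv (Jh a b x) (mv E u)

/-!
The remainder set is `S = g '' B` for the closed unit ball `B`. Because the ellipsoid avoids the
branch cut of `θ`, `g` is strictly differentiable at every point of `B`, so `S` is compact and
its frontier lies in `S`. Write `z, w ∈ ℂ` for the positions of `x` and `p = x + Eu` relative
to `o`. The derivative of `g` at `u` is `(J_h(p) - J_h(x)) E`, and
`det (J_h(p) - J_h(x)) = (|z| + |w|) (|z| |w| - ⟪z, w⟫) / (|z|² |w|²)`,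
which by Cauchy–Schwarz is positive unless `w` is a positive multiple of `z`; in that case
`g(u) = 0`. So at an interior point `u` with `g(u) ≠ 0` the inverse function theorem makes `g`
open, and `g(u)` is interior to `S`. The value `0` itself is attained on the unit sphere, at the
point where `Eu` is a positive multiple of `x - o`.
-/

open Set Metric Filter Topology Complex Matrix
open scoped InnerProductSpace

theorem frontier_image_subset_image_diff {X Y : Type*} [TopologicalSpace X] [TopologicalSpace Y]
    [T2Space Y] {f : X → Y} {K U : Set X} (hK : IsCompact K) (hf : ContinuousOn f K)
    (hU : ∀ u ∈ U, f '' K ∈ 𝓝 (f u)) :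
    frontier (f '' K) ⊆ f '' (K \ U) := by
  intro y hy
  obtain ⟨u, huK, rfl⟩ : y ∈ f '' K := by
    simpa [(hK.image_of_continuousOn hf).isClosed.closure_eq] using frontier_subset_closure hy
  exact ⟨u, ⟨huK, fun huU => hy.2 (mem_interior_iff_mem_nhds.2 (hU u huU))⟩, rfl⟩

theorem Matrix.range_toEuclideanCLM_eq_top {𝕜 n : Type*} [RCLike 𝕜] [Fintype n]
    [DecidableEq n] {A : Matrix n n 𝕜} (hA : IsUnit A.det) :
    (toEuclideanCLM (𝕜 := 𝕜) A).range = ⊤ := by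
  refine LinearMap.range_eq_top.2 fun v => ?_
  obtain ⟨w, hw⟩ := mulVec_surjective_iff_isUnit.2 ((A.isUnit_iff_isUnit_det).2 hA) v.ofLp
  exact ⟨WithLp.toLp 2 w, by simp [hw]⟩

theorem EuclideanSpace.proj_comp_toEuclideanCLM {𝕜 n : Type*} [RCLike 𝕜] [Fintype n]
    [DecidableEq n] (A : Matrix n n 𝕜) (i : n) :
    EuclideanSpace.proj i ∘L toEuclideanCLM (𝕜 := 𝕜) A =
      ∑ j, A i j • EuclideanSpace.proj j := by
  ext u
  simp [mulVec, dotProduct]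

namespace RangeBearing

abbrev E2 := EuclideanSpace ℝ (Fin 2)

lemma mv_eq_toEuclideanCLM (M : Matrix (Fin 2) (Fin 2) ℝ) (u : E2) :
    mv M u = toEuclideanCLM (𝕜 := ℝ) M u := rfl

def offset (a b : ℝ) (p : E2) : ℂ := ⟨p 0 - a, p 1 - b⟩

lemma rr_eq_norm_offset (a b : ℝ) (p : E2) : rr a b p = ‖offset a b p‖ := by
  simp [rr, offset, Complex.norm_def, Complex.normSq_mk, sq]

lemma theta_eq_arg_offset (a b : ℝ) (p : E2) : theta a b p = arg (offset a b p) := rfl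

lemma offset_mem_slitPlane_iff (a b : ℝ) (p : E2) :
    offset a b p ∈ slitPlane ↔ ¬(p 0 ≤ a ∧ p 1 = b) := by
  simp only [mem_slitPlane_iff, offset, sub_pos, ne_eq, sub_eq_zero, not_and_or, not_le]

lemma offset_eq (a b : ℝ) (p : E2) :
    offset a b p = orthonormalBasisOneI.repr.symm p - ⟨a, b⟩ := by
  apply Complex.ext <;> simp [offset]

lemma hasStrictFDerivAt_offset (a b : ℝ) (p : E2) :
    HasStrictFDerivAt (offset a b)
      (orthonormalBasisOneI.repr.symm.toContinuousLinearEquiv : E2 →L[ℝ] ℂ) p := by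
  rw [show offset a b = _ from funext (offset_eq a b)]
  exact (orthonormalBasisOneI.repr.symm.toContinuousLinearEquiv : E2 →L[ℝ] ℂ)
    |>.hasStrictFDerivAt.sub_const _

lemma hasStrictFDerivAt_rr (a b : ℝ) (p : E2) (hp : offset a b p ≠ 0) :
    HasStrictFDerivAt (rr a b)
      (EuclideanSpace.proj (0 : Fin 2) ∘L toEuclideanCLM (𝕜 := ℝ) (Jh a b p)) p := by
  have hsq : (p 0 - a) ^ 2 + (p 1 - b) ^ 2 ≠ 0 := by
    have hr := norm_pos_iff.2 hp
    rw [← rr_eq_norm_offset, rr, Real.sqrt_pos] at hr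
    exact hr.ne'
  have h0 : HasStrictFDerivAt (fun q : E2 => q 0 - a)
      (EuclideanSpace.proj (0 : Fin 2) : E2 →L[ℝ] ℝ) p :=
    (EuclideanSpace.proj (0 : Fin 2) : E2 →L[ℝ] ℝ).hasStrictFDerivAt.sub_const a
  have h1 : HasStrictFDerivAt (fun q : E2 => q 1 - b)
      (EuclideanSpace.proj (1 : Fin 2) : E2 →L[ℝ] ℝ) p :=
    (EuclideanSpace.proj (1 : Fin 2) : E2 →L[ℝ] ℝ).hasStrictFDerivAt.sub_const b
  refine (((h0.pow 2).add (h1.pow 2)).sqrt hsq).congr_fderiv ?_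
  ext u
  simp [EuclideanSpace.proj_comp_toEuclideanCLM, Fin.sum_univ_two, Jh, rr]
  field_simp

lemma hasStrictFDerivAt_theta (a b : ℝ) (p : E2) (hp : offset a b p ∈ slitPlane) :
    HasStrictFDerivAt (theta a b)
      (EuclideanSpace.proj (1 : Fin 2) ∘L toEuclideanCLM (𝕜 := ℝ) (Jh a b p)) p := by
  have him := imCLM.hasStrictFDerivAt.comp p
    ((hasStrictFDerivAt_log_real hp).comp p (hasStrictFDerivAt_offset a b p))
  rw [show theta a b = fun q => (log (offset a b q)).im from funext fun q => (log_im _).symm]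
  refine him.congr_fderiv ?_
  ext u
  simp [EuclideanSpace.proj_comp_toEuclideanCLM, Fin.sum_univ_two, Jh, rr_eq_norm_offset,
    Complex.inv_re, Complex.inv_im, ← normSq_eq_norm_sq, offset]
  ring

lemma hasStrictFDerivAt_hMeas (a b : ℝ) (p : E2) (hp : offset a b p ∈ slitPlane) :
    HasStrictFDerivAt (hMeas a b) (toEuclideanCLM (𝕜 := ℝ) (Jh a b p)) p := by
  rw [hasStrictFDerivAt_euclidean]
  intro i
  fin_cases i
  · exact hasStrictFDerivAt_rr a b p (slitPlane_ne_zero hp)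
  · exact hasStrictFDerivAt_theta a b p hp

lemma hasStrictFDerivAt_gRem (a b : ℝ) (x : E2) (E : Matrix (Fin 2) (Fin 2) ℝ) (u : E2)
    (hp : offset a b (x + mv E u) ∈ slitPlane) :
    HasStrictFDerivAt (gRem a b x E)
      (toEuclideanCLM (𝕜 := ℝ) ((Jh a b (x + mv E u) - Jh a b x) * E)) u := by
  have hE := (toEuclideanCLM (𝕜 := ℝ) E).hasStrictFDerivAt (x := u)
  have hJE := (toEuclideanCLM (𝕜 := ℝ) (Jh a b x) ∘L toEuclideanCLM (𝕜 := ℝ) E)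
    |>.hasStrictFDerivAt (x := u)
  refine ((((hasStrictFDerivAt_hMeas a b _ hp).comp u (hE.const_add x)).sub_const
    (hMeas a b x)).sub hJE).congr_fderiv ?_
  rw [map_mul, map_sub, ContinuousLinearMap.mul_def, ContinuousLinearMap.sub_comp]

def polarJacobian (z : ℂ) : Matrix (Fin 2) (Fin 2) ℝ :=
  !![z.re / ‖z‖, z.im / ‖z‖; -z.im / ‖z‖ ^ 2, z.re / ‖z‖ ^ 2]

lemma Jh_eq_polarJacobian (a b : ℝ) (p : E2) : Jh a b p = polarJacobian (offset a b p) := by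
  rw [Jh, rr_eq_norm_offset]
  rfl

lemma det_polarJacobian_sub {z w : ℂ} (hz : z ≠ 0) (hw : w ≠ 0) :
    (polarJacobian w - polarJacobian z).det =
      (‖z‖ + ‖w‖) * (‖z‖ * ‖w‖ - ⟪z, w⟫_ℝ) / (‖z‖ ^ 2 * ‖w‖ ^ 2) := by
  have hz2 : ‖z‖ ^ 2 = z.re ^ 2 + z.im ^ 2 := by rw [Complex.sq_norm, normSq_apply]; ring
  have hw2 : ‖w‖ ^ 2 = w.re ^ 2 + w.im ^ 2 := by rw [Complex.sq_norm, normSq_apply]; ring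
  have := norm_pos_iff.2 hz
  have := norm_pos_iff.2 hw
  rw [det_fin_two]
  simp [polarJacobian, Complex.inner]
  field_simp
  linear_combination (-‖z‖ ^ 3) * hw2 + (-‖w‖ ^ 3) * hz2

lemma det_polarJacobian_sub_pos {z w : ℂ} (hz : z ≠ 0) (hw : w ≠ 0)
    (h : ⟪z, w⟫_ℝ ≠ ‖z‖ * ‖w‖) : 0 < (polarJacobian w - polarJacobian z).det := by
  rw [det_polarJacobian_sub hz hw]
  have := norm_pos_iff.2 hz
  exact div_pos (mul_pos (by positivity) (sub_pos.2 ((real_inner_le_norm z w).lt_of_ne h)))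
    (by positivity)

section

variable (a b : ℝ) (x : E2) (E : Matrix (Fin 2) (Fin 2) ℝ) (u : E2)

lemma offset_add_mv_sub :
    offset a b (x + mv E u) - offset a b x = ⟨mv E u 0, mv E u 1⟩ := by
  apply Complex.ext <;> simp [offset]

lemma gRem_apply_zero :
    gRem a b x E u 0 = ‖offset a b (x + mv E u)‖ - ‖offset a b x‖ -
      ⟪offset a b x, offset a b (x + mv E u) - offset a b x⟫_ℝ / ‖offset a b x‖ := by
  rw [offset_add_mv_sub]
  simp [gRem, hMeas, rr_eq_norm_offset, mv, Jh, Complex.inner, offset]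
  ring

lemma gRem_apply_one :
    gRem a b x E u 1 = arg (offset a b (x + mv E u)) - arg (offset a b x) -
      ⟪I * offset a b x, offset a b (x + mv E u) - offset a b x⟫_ℝ /
        ‖offset a b x‖ ^ 2 := by
  rw [offset_add_mv_sub]
  simp [gRem, hMeas, theta_eq_arg_offset, rr_eq_norm_offset, mv, Jh, Complex.inner, offset]
  ring

end

section

variable {a b : ℝ} {x : E2} {E : Matrix (Fin 2) (Fin 2) ℝ} {u : E2}

lemma gRem_eq_zero_of_offset_eq_smul (hx : offset a b x ≠ 0) {t : ℝ} (ht : 0 < t)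
    (h : offset a b (x + mv E u) = t • offset a b x) : gRem a b x E u = 0 := by
  have hz := norm_pos_iff.2 hx
  have hd : offset a b (x + mv E u) - offset a b x = (t - 1) • offset a b x := by
    rw [h, sub_smul, one_smul]
  ext i
  fin_cases i
  · change gRem a b x E u 0 = 0
    rw [gRem_apply_zero, hd, h, norm_smul, inner_smul_right,
      real_inner_self_eq_norm_sq, Real.norm_of_nonneg ht.le]
    field_simp
    ring
  · change gRem a b x E u 1 = 0
    have hI : ⟪I * offset a b x, offset a b x⟫_ℝ = 0 := by
      simp [Complex.inner, mul_comm]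
    rw [gRem_apply_one, hd, h, inner_smul_right, hI, Complex.real_smul, arg_real_mul _ ht]
    simp

lemma gRem_eq_zero_of_inner_eq (hx : offset a b x ≠ 0) (hp : offset a b (x + mv E u) ≠ 0)
    (h : ⟪offset a b x, offset a b (x + mv E u)⟫_ℝ =
      ‖offset a b x‖ * ‖offset a b (x + mv E u)‖) :
    gRem a b x E u = 0 := by
  rw [inner_eq_norm_mul_iff_real] at h
  refine gRem_eq_zero_of_offset_eq_smul hx (t := ‖offset a b (x + mv E u)‖ / ‖offset a b x‖)
    (by positivity) ?_
  rw [div_eq_inv_mul, mul_smul, h, ← mul_smul, inv_mul_cancel₀ (norm_ne_zero_iff.2 hx),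
    one_smul]

lemma exists_norm_eq_one_gRem_eq_zero (hE : IsUnit E.det) (hx : offset a b x ≠ 0) :
    ∃ u : E2, ‖u‖ = 1 ∧ gRem a b x E u = 0 := by
  set v : E2 := WithLp.toLp 2 ![x 0 - a, x 1 - b]
  obtain ⟨q, hq⟩ := LinearMap.range_eq_top.1 (range_toEuclideanCLM_eq_top hE) v
  have hq0 : q ≠ 0 := by
    rintro rfl
    apply hx
    apply Complex.ext
    · simpa [v, offset] using (congrArg (· 0) hq).symm
    · simpa [v, offset] using (congrArg (· 1) hq).symm
  refine ⟨‖q‖⁻¹ • q, norm_smul_inv_norm hq0, gRem_eq_zero_of_offset_eq_smul hx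
    (t := 1 + ‖q‖⁻¹) (by positivity) ?_⟩
  have hEq : mv E (‖q‖⁻¹ • q) = ‖q‖⁻¹ • v := by
    rw [mv_eq_toEuclideanCLM, map_smul]
    exact congrArg _ hq
  apply Complex.ext <;> simp [offset, hEq, v] <;> ring

lemma gRem_image_mem_nhds (hE : 0 < E.det) (hx : offset a b x ≠ 0)
    (hp : offset a b (x + mv E u) ∈ slitPlane) (hg : gRem a b x E u ≠ 0) {s : Set E2}
    (hs : s ∈ 𝓝 u) : gRem a b x E '' s ∈ 𝓝 (gRem a b x E u) := by
  have hinner : ⟪offset a b x, offset a b (x + mv E u)⟫_ℝ ≠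
      ‖offset a b x‖ * ‖offset a b (x + mv E u)‖ :=
    fun h => hg (gRem_eq_zero_of_inner_eq hx (slitPlane_ne_zero hp) h)
  have hdet : 0 < ((Jh a b (x + mv E u) - Jh a b x) * E).det := by
    rw [det_mul, Jh_eq_polarJacobian, Jh_eq_polarJacobian]
    exact mul_pos (det_polarJacobian_sub_pos hx (slitPlane_ne_zero hp) hinner) hE
  rw [← (hasStrictFDerivAt_gRem a b x E u hp).map_nhds_eq_of_surj
    (range_toEuclideanCLM_eq_top hdet.ne'.isUnit)]
  exact image_mem_map hs

end

end RangeBearing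

open RangeBearing in
/-- **Theorem 5 (main result).** Under the avoidance hypothesis, the topological frontier of
the remainder set `S = {g(u) : ‖u‖ ≤ 1}` is contained in the image of the unit sphere. -/
theorem frontier_remainder_subset_sphere_image
    (a b : ℝ) (x : EuclideanSpace ℝ (Fin 2)) (E : Matrix (Fin 2) (Fin 2) ℝ)
    (hE : 0 < E.det)
    (havoid : ∀ u : EuclideanSpace ℝ (Fin 2), ‖u‖ ≤ 1 →
      ¬((x + mv E u) 0 ≤ a ∧ (x + mv E u) 1 = b)) :
    frontier {y : EuclideanSpace ℝ (Fin 2) |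
        ∃ u : EuclideanSpace ℝ (Fin 2), ‖u‖ ≤ 1 ∧ gRem a b x E u = y} ⊆
      {y : EuclideanSpace ℝ (Fin 2) |
        ∃ u : EuclideanSpace ℝ (Fin 2), ‖u‖ = 1 ∧ gRem a b x E u = y} := by
  have hslit : ∀ u ∈ closedBall (0 : E2) 1, offset a b (x + mv E u) ∈ slitPlane :=
    fun u hu => (offset_mem_slitPlane_iff a b _).2 (havoid u (mem_closedBall_zero_iff.1 hu))
  have hx : offset a b x ≠ 0 := by
    simpa [mv_eq_toEuclideanCLM] using slitPlane_ne_zero (hslit 0 (by simp))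
  obtain ⟨u₀, hu₀, hg₀⟩ := exists_norm_eq_one_gRem_eq_zero hE.ne'.isUnit hx
  have hS : {y | ∃ u : E2, ‖u‖ ≤ 1 ∧ gRem a b x E u = y} =
      gRem a b x E '' closedBall 0 1 := by
    ext
    simp
  rw [hS]
  refine (frontier_image_subset_image_diff (U := {u | ‖u‖ < 1 ∧ gRem a b x E u ≠ 0})
    (isCompact_closedBall 0 1) (fun u hu => (hasStrictFDerivAt_gRem a b x E u
      (hslit u hu)).continuousAt.continuousWithinAt) ?_).trans ?_
  · rintro u ⟨hu, hg⟩
    exact gRem_image_mem_nhds hE hx (hslit u (mem_closedBall_zero_iff.2 hu.le)) hg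
      (closedBall_mem_nhds_of_mem (mem_ball_zero_iff.2 hu))
  · rintro _ ⟨u, ⟨hu, hU⟩, rfl⟩
    rw [mem_closedBall_zero_iff] at hu
    rcases hu.eq_or_lt with h1 | h1
    · exact ⟨u, h1, rfl⟩
    · have hg : gRem a b x E u = 0 := not_not.1 fun hg => hU ⟨h1, hg⟩
      exact ⟨u₀, hu₀, hg₀.trans hg.symm⟩
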